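/- Let S_1 and S_2 be nonempty convex subsets of real vector spaces, let c ∈ ℝ, and let u_1 : S_1 × S_2 → ℝ be such that x_1 ↦ u_1(x_1, x_2) is concave on S_1 for every fixed x_2 ∈ S_2, and x_2 ↦ u_1(x_1, x_2) is convex on S_2 for every fixed x_1 ∈ S_1. Let u_2 = c − u_1, and suppose that for every (x_1, x_2) ∈ S_1 × S_2 both sup_{x_1' ∈ S_1} u_1(x_1', x_2) and inf_{x_2' ∈ S_2} u_1(x_1, x_2') are finite. Then the exploitability Φ(x_1, x_2) = ( sup_{x_1' ∈ S_1} u_1(x_1', x_2) − u_1(x_1, x_2) ) + ( sup_{x_2' ∈ S_2} u_2(x_1, x_2') − u_2(x_1, x_2) ) is a convex function on S_1 × S_2. -/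

import Mathlib

/-!
Player 1's best-response value `x₂ ↦ sup_{x₁'} u₁ x₁' x₂` is a pointwise supremum of the convex
functions `u₁ x₁' ·`, hence convex; likewise player 2's best-response value is convex in `x₁`,
because `u₂ = c - u₁` is convex in `x₁`. The remaining terms `-u₁ - u₂` add up to the constant
`-c`, so the exploitability is a convex function of `x₂` plus a convex function of `x₁`, minus `c`.
-/

open Set

theorem convexOn_csSup_image {ι E : Type*} [AddCommGroup E] [Module ℝ E] {s : Set E}
    {T : Set ι} {f : ι → E → ℝ} (hT : T.Nonempty) (hf : ∀ i ∈ T, ConvexOn ℝ s (f i))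
    (hbdd : ∀ x ∈ s, BddAbove ((fun i => f i x) '' T)) :
    ConvexOn ℝ s (fun x => sSup ((fun i => f i x) '' T)) := by
  refine ⟨(hf _ hT.some_mem).1, fun x hx y hy a b ha hb hab => csSup_le (hT.image _) ?_⟩
  rintro _ ⟨i, hi, rfl⟩
  calc f i (a • x + b • y) ≤ a • f i x + b • f i y := (hf i hi).2 hx hy ha hb hab
    _ ≤ a • sSup ((fun i => f i x) '' T) + b • sSup ((fun i => f i y) '' T) := by
      gcongr
      · exact le_csSup (hbdd x hx) (mem_image_of_mem _ hi)
      · exact le_csSup (hbdd y hy) (mem_image_of_mem _ hi)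

theorem ConvexOn.comp_fst_add_comp_snd {𝕜 E F β : Type*} [Semiring 𝕜] [PartialOrder 𝕜]
    [AddCommMonoid E] [AddCommMonoid F] [AddCommMonoid β] [PartialOrder β] [IsOrderedAddMonoid β]
    [Module 𝕜 E] [Module 𝕜 F] [DistribMulAction 𝕜 β]
    {s : Set E} {t : Set F} {f : E → β} {g : F → β}
    (hf : ConvexOn 𝕜 s f) (hg : ConvexOn 𝕜 t g) :
    ConvexOn 𝕜 (s ×ˢ t) (fun p => f p.1 + g p.2) :=
  have hst : Convex 𝕜 (s ×ˢ t) := hf.1.prod hg.1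
  ((hf.comp_linearMap (LinearMap.fst 𝕜 E F)).subset (fun _ hp => hp.1) hst).add
    ((hg.comp_linearMap (LinearMap.snd 𝕜 E F)).subset (fun _ hp => hp.2) hst)

theorem constant_sum_concave_convex_game_convex_exploitability_general
    {E₁ E₂ : Type*} [AddCommGroup E₁] [Module ℝ E₁] [AddCommGroup E₂] [Module ℝ E₂]
    (S₁ : Set E₁) (S₂ : Set E₂)
    (hS₁ne : S₁.Nonempty) (hS₂ne : S₂.Nonempty)
    (c : ℝ) (u₁ : E₁ → E₂ → ℝ) (u₂ : E₁ → E₂ → ℝ)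
    (hu₂ : ∀ x₁ x₂, u₂ x₁ x₂ = c - u₁ x₁ x₂)
    (hconc : ∀ x₂ ∈ S₂, ConcaveOn ℝ S₁ (fun x₁ => u₁ x₁ x₂))
    (hconv : ∀ x₁ ∈ S₁, ConvexOn ℝ S₂ (fun x₂ => u₁ x₁ x₂))
    (hbdd₁ : ∀ x₂ ∈ S₂, BddAbove ((fun x₁' => u₁ x₁' x₂) '' S₁))
    (hbdd₂ : ∀ x₁ ∈ S₁, BddBelow ((fun x₂' => u₁ x₁ x₂') '' S₂)) :
    ConvexOn ℝ (S₁ ×ˢ S₂)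
      (fun p : E₁ × E₂ =>
        (sSup ((fun x₁' => u₁ x₁' p.2) '' S₁) - u₁ p.1 p.2)
        + (sSup ((fun x₂' => u₂ p.1 x₂') '' S₂) - u₂ p.1 p.2)) := by
  have hconv₂ : ∀ x₂ ∈ S₂, ConvexOn ℝ S₁ (fun x₁ => u₂ x₁ x₂) := fun x₂ hx₂ => by
    refine ((hconc x₂ hx₂).neg.add_const c).congr fun x₁ _ => ?_
    simp only [Pi.add_apply, Pi.neg_apply, hu₂]
    ring
  have hbdd₂' : ∀ x₁ ∈ S₁, BddAbove ((fun x₂' => u₂ x₁ x₂') '' S₂) := fun x₁ hx₁ => by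
    obtain ⟨m, hm⟩ := hbdd₂ x₁ hx₁
    refine ⟨c - m, ?_⟩
    rintro _ ⟨x₂, hx₂, rfl⟩
    show u₂ x₁ x₂ ≤ c - m
    rw [hu₂]
    exact sub_le_sub_left (hm (mem_image_of_mem _ hx₂)) c
  have hbest := ((convexOn_csSup_image hS₂ne hconv₂ hbdd₂').comp_fst_add_comp_snd
    (convexOn_csSup_image hS₁ne hconv hbdd₁)).add_const (-c)
  refine hbest.congr fun p _ => ?_
  simp only [Pi.add_apply, hu₂ p.1 p.2]
  ring

/-- A two-player constant-sum concave-convex game has convex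
exploitability. -/
theorem constant_sum_concave_convex_game_convex_exploitability
    {E₁ E₂ : Type*} [AddCommGroup E₁] [Module ℝ E₁] [AddCommGroup E₂] [Module ℝ E₂]
    (S₁ : Set E₁) (S₂ : Set E₂)
    (hS₁ne : S₁.Nonempty) (hS₂ne : S₂.Nonempty)
    (hS₁conv : Convex ℝ S₁) (hS₂conv : Convex ℝ S₂)
    (c : ℝ) (u₁ : E₁ → E₂ → ℝ) (u₂ : E₁ → E₂ → ℝ)
    (hu₂ : ∀ x₁ x₂, u₂ x₁ x₂ = c - u₁ x₁ x₂)
    (hconc : ∀ x₂ ∈ S₂, ConcaveOn ℝ S₁ (fun x₁ => u₁ x₁ x₂))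
    (hconv : ∀ x₁ ∈ S₁, ConvexOn ℝ S₂ (fun x₂ => u₁ x₁ x₂))
    (hbdd₁ : ∀ x₂ ∈ S₂, BddAbove ((fun x₁' => u₁ x₁' x₂) '' S₁))
    (hbdd₂ : ∀ x₁ ∈ S₁, BddBelow ((fun x₂' => u₁ x₁ x₂') '' S₂)) :
    ConvexOn ℝ (S₁ ×ˢ S₂)
      (fun p : E₁ × E₂ =>
        (sSup ((fun x₁' => u₁ x₁' p.2) '' S₁) - u₁ p.1 p.2)
        + (sSup ((fun x₂' => u₂ p.1 x₂') '' S₂) - u₂ p.1 p.2)) :=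
  constant_sum_concave_convex_game_convex_exploitability_general S₁ S₂ hS₁ne hS₂ne c u₁ u₂ hu₂ hconc
    hconv hbdd₁ hbdd₂
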